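/- Let k be an algebraically closed field of characteristic zero, V a k-vector space of dimension d, S := k[y₁,…,yₙ], and F := S^{⊕r}. Let (x₁,…,xₙ,v₁,…,v_r) be a stable tuple, π : F → V the induced surjective S-module map with π(eⱼ) = vⱼ, and K := ker π. Then the k-vector space Hom_S(K, F/K) of S-linear maps is finite-dimensional and dim_k Hom_S(K, F/K) = r·d − d² + dim_k { (z₁,…,zₙ) ∈ End(V)ⁿ : xᵢ∘zⱼ − zⱼ∘xᵢ + zᵢ∘xⱼ − xⱼ∘zᵢ = 0 for all i,j }. -/

import Mathlib

/-!
Write `π : F → V` for `φ` composed with the quotient map, and consider the pairs `(z, L)` of a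
tuple `z` of endomorphisms of `V` and a `k`-linear `L : F → V` with
`L (yᵢ • f) = zᵢ (π f) + xᵢ (L f)`, i.e. such that `π + ε L : F → V[ε]` is `S`-linear for the
action `yᵢ ↦ xᵢ + ε zᵢ`. Expanding `yᵢ yⱼ f` in two ways shows that `z` is tangent to the
commuting variety, and `(z, L) ↦ (z, (L eⱼ)ⱼ)` is an isomorphism onto `T × Vʳ`: `L` is determined
by its values on the basis, and any `(z, w)` is realised by evaluating polynomials at the
commuting dual-number matrices `xᵢ + ε zᵢ`. On the other hand, restricting `L` to `K` is onto
`Hom_S(K, F/K)` (extend `k`-linearly, then read off `z`), with kernel the pairs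
`([g, x], g ∘ π)`, `g ∈ End V`. Hence `dim Hom_S(K, F/K) + d² = dim T + r d`.
-/

/-- The Zariski tangent space to the variety of commuting tuples at a commuting tuple
`x`, i.e. the space of tuples `(z₁,…,zₙ)` of endomorphisms with
`xᵢ∘zⱼ − zⱼ∘xᵢ + zᵢ∘xⱼ − xⱼ∘zᵢ = 0` for all `i, j`. -/
def commTangentEnd (k : Type*) [Field k] {n : ℕ} {V : Type*} [AddCommGroup V] [Module k V]
    (x : Fin n → Module.End k V) : Submodule k (Fin n → Module.End k V) where
  carrier := {z | ∀ i j, x i * z j - z j * x i + z i * x j - x j * z i = 0}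
  zero_mem' := by intro i j; simp
  add_mem' := by
    intro a b ha hb i j
    have h : (x i * a j - a j * x i + a i * x j - x j * a i) +
        (x i * b j - b j * x i + b i * x j - x j * b i) = 0 := by
      rw [ha i j, hb i j, add_zero]
    calc x i * (a + b) j - (a + b) j * x i + (a + b) i * x j - x j * (a + b) i
        = (x i * a j - a j * x i + a i * x j - x j * a i) +
            (x i * b j - b j * x i + b i * x j - x j * b i) := by
          simp only [Pi.add_apply, mul_add, add_mul]; abel
      _ = 0 := h
  smul_mem' := by
    intro c z hz i j
    simp only [Pi.smul_apply, mul_smul_comm, smul_mul_assoc, ← smul_sub, ← smul_add]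
    rw [hz i j, smul_zero]

open MvPolynomial

namespace MvPolynomial

variable {σ R A : Type*} [CommSemiring R] [Semiring A] [Algebra R A]

open scoped IsMulCommutative in
noncomputable def aevalOfCommute (T : σ → A) (hT : ∀ i j, Commute (T i) (T j)) :
    MvPolynomial σ R →ₐ[R] A :=
  haveI := Algebra.isMulCommutative_adjoin R (s := Set.range T)
    (by rintro _ ⟨i, rfl⟩ _ ⟨j, rfl⟩; exact (hT i j).eq)
  (Algebra.adjoin R (Set.range T)).val.comp (aeval fun i => ⟨T i, Algebra.subset_adjoin ⟨i, rfl⟩⟩)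

@[simp] theorem aevalOfCommute_X (T : σ → A) (hT : ∀ i j, Commute (T i) (T j)) (i : σ) :
    aevalOfCommute T hT (X i : MvPolynomial σ R) = T i := by
  simp [aevalOfCommute]

end MvPolynomial

section Equivariance

variable {σ k V : Type*} [CommSemiring k] [AddCommMonoid V] [Module k V]
  (ρ : MvPolynomial σ k →ₐ[k] Module.End k V)

theorem LinearMap.map_smul_of_map_X_smul {N : Type*} [AddCommMonoid N]
    [Module (MvPolynomial σ k) N] [Module k N] [IsScalarTower k (MvPolynomial σ k) N]
    {L : N →ₗ[k] V} (hL : ∀ i m, L ((X i : MvPolynomial σ k) • m) = ρ (X i) (L m))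
    (p : MvPolynomial σ k) (m : N) : L (p • m) = ρ p (L m) := by
  induction p using MvPolynomial.induction_on generalizing m with
  | C c => rw [← algebraMap_eq, algebraMap_smul, AlgHom.commutes, Module.algebraMap_end_apply,
      L.map_smul]
  | add p q hp hq => rw [add_smul, map_add, hp, hq, map_add, LinearMap.add_apply]
  | mul_X p i hp => rw [mul_comm, mul_smul, hL, hp, map_mul, Module.End.mul_apply]

theorem LinearMap.eq_sum_of_map_X_smul {ι : Type*} [Fintype ι] [DecidableEq ι]
    {L : (ι → MvPolynomial σ k) →ₗ[k] V}
    (hL : ∀ i f, L ((X i : MvPolynomial σ k) • f) = ρ (X i) (L f)) (f : ι → MvPolynomial σ k) :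
    L f = ∑ j, ρ (f j) (L (Pi.single j 1)) := by
  conv_lhs => rw [← (Pi.basisFun (MvPolynomial σ k) ι).sum_repr f]
  simp [L.map_smul_of_map_X_smul ρ hL]

end Equivariance

def RestrictScalars.linearEquiv (R S M : Type*) [CommSemiring R] [Semiring S] [Algebra R S]
    [AddCommMonoid M] [Module S M] [Module R M] [IsScalarTower R S M] :
    RestrictScalars R S M ≃ₗ[R] M where
  __ := RestrictScalars.addEquiv R S M
  map_smul' c m := algebraMap_smul S c (RestrictScalars.addEquiv R S M m)

section DualNumber

open TrivSqZeroExt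

variable {k V : Type*} [Field k] [AddCommGroup V] [Module k V] {n : ℕ}
  {x : Fin n → Module.End k V} (hx : ∀ i j, Commute (x i) (x j))
  {z : Fin n → Module.End k V} (hz : z ∈ commTangentEnd k x)

include hx hz in
theorem commute_inl_add_inr_of_mem_commTangentEnd (i j : Fin n) :
    Commute (inl (x i) + inr (z i) : DualNumber (Module.End k V)) (inl (x j) + inr (z j)) := by
  refine TrivSqZeroExt.ext (by simpa using (hx i j).eq) ?_
  simp only [snd_mul, fst_add, snd_add, fst_inl, snd_inl, fst_inr, snd_inr, smul_eq_mul,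
    MulOpposite.smul_eq_mul_unop, MulOpposite.unop_op, add_zero, zero_add]
  rw [← sub_eq_zero, ← hz i j]
  abel

noncomputable def dualEval : MvPolynomial (Fin n) k →ₐ[k] DualNumber (Module.End k V) :=
  aevalOfCommute _ (commute_inl_add_inr_of_mem_commTangentEnd hx hz)

theorem fstHom_comp_dualEval :
    (fstHom k _ (Module.End k V)).comp (dualEval hx hz) = aevalOfCommute x hx :=
  MvPolynomial.algHom_ext fun i => by simp [dualEval]

@[simp] theorem fst_dualEval (p : MvPolynomial (Fin n) k) :
    (dualEval hx hz p).fst = aevalOfCommute x hx p :=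
  AlgHom.congr_fun (fstHom_comp_dualEval hx hz) p

@[simp] theorem snd_dualEval_X (i : Fin n) : (dualEval hx hz (X i)).snd = z i := by
  simp [dualEval]

theorem snd_dualEval_mul (p q : MvPolynomial (Fin n) k) :
    (dualEval hx hz (p * q)).snd =
      aevalOfCommute x hx p * (dualEval hx hz q).snd +
        (dualEval hx hz p).snd * aevalOfCommute x hx q := by
  simp [snd_mul]

variable {r : ℕ}

noncomputable def tangentLift (v w : Fin r → V) : (Fin r → MvPolynomial (Fin n) k) →ₗ[k] V where
  toFun f := ∑ j, ((dualEval hx hz (f j)).snd (v j) + aevalOfCommute x hx (f j) (w j))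
  map_add' f g := by
    simp only [Pi.add_apply, map_add, snd_add, LinearMap.add_apply, ← Finset.sum_add_distrib]
    exact Finset.sum_congr rfl fun _ _ => by abel
  map_smul' c f := by simp [Finset.smul_sum]

theorem tangentLift_single (v w : Fin r → V) (j : Fin r) :
    tangentLift hx hz v w (Pi.single j 1) = w j := by
  classical
  simp [tangentLift, Pi.single_apply, apply_ite, ite_apply]

theorem tangentLift_X_smul (v w : Fin r → V) (i : Fin n) (f : Fin r → MvPolynomial (Fin n) k) :
    tangentLift hx hz v w ((X i : MvPolynomial (Fin n) k) • f) =
      z i (∑ j, aevalOfCommute x hx (f j) (v j)) + x i (tangentLift hx hz v w f) := by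
  simp only [tangentLift, LinearMap.coe_mk, AddHom.coe_mk, Pi.smul_apply, smul_eq_mul,
    snd_dualEval_mul]
  simp only [snd_dualEval_X, aevalOfCommute_X, map_mul, Module.End.mul_apply, LinearMap.add_apply,
    map_sum, map_add, Finset.sum_add_distrib]
  abel

end DualNumber

section Presentation

variable {k V : Type*} [Field k] [AddCommGroup V] [Module k V] {n r : ℕ}
  {x : Fin n → Module.End k V}
  {K : Submodule (MvPolynomial (Fin n) k) (Fin r → MvPolynomial (Fin n) k)}
  (φ : ((Fin r → MvPolynomial (Fin n) k) ⧸ K) ≃ₗ[k] V)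

noncomputable def presentationMap : (Fin r → MvPolynomial (Fin n) k) →ₗ[k] V :=
  φ.toLinearMap ∘ₗ K.mkQ.restrictScalars k

theorem presentationMap_apply (f : Fin r → MvPolynomial (Fin n) k) :
    presentationMap φ f = φ (K.mkQ f) := rfl

theorem presentationMap_surjective : Function.Surjective (presentationMap φ) :=
  φ.surjective.comp K.mkQ_surjective

theorem presentationMap_eq_zero_iff {f : Fin r → MvPolynomial (Fin n) k} :
    presentationMap φ f = 0 ↔ f ∈ K := by
  rw [presentationMap_apply, φ.map_eq_zero_iff, Submodule.mkQ_apply,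
    Submodule.Quotient.mk_eq_zero]

theorem exists_eq_comp_presentationMap {M : Type*} [AddCommGroup M] [Module k M]
    (L : (Fin r → MvPolynomial (Fin n) k) →ₗ[k] M) (hL : ∀ f ∈ K, L f = 0) :
    ∃ g : V →ₗ[k] M, L = g ∘ₗ presentationMap φ :=
  ⟨(K.restrictScalars k).liftQ L hL ∘ₗ
      (Submodule.Quotient.restrictScalarsEquiv k K).symm.toLinearMap ∘ₗ φ.symm.toLinearMap,
    LinearMap.ext fun _ => by simp [presentationMap_apply]; rfl⟩

variable (x) in
def deformations :
    Submodule k ((Fin n → Module.End k V) × ((Fin r → MvPolynomial (Fin n) k) →ₗ[k] V)) where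
  carrier := {zL | ∀ i f,
    zL.2 ((X i : MvPolynomial (Fin n) k) • f) = zL.1 i (presentationMap φ f) + x i (zL.2 f)}
  zero_mem' := by simp
  add_mem' ha hb i f := by simp [ha i f, hb i f]; abel
  smul_mem' c zL h i f := by simp [h i f]

variable {φ} (hx : ∀ i j, Commute (x i) (x j))
  (hφ : ∀ (i : Fin n) (q : (Fin r → MvPolynomial (Fin n) k) ⧸ K),
    φ ((X i : MvPolynomial (Fin n) k) • q) = x i (φ q))

include hφ in
theorem presentationMap_X_smul (i : Fin n) (f : Fin r → MvPolynomial (Fin n) k) :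
    presentationMap φ ((X i : MvPolynomial (Fin n) k) • f) = x i (presentationMap φ f) := by
  rw [presentationMap_apply, map_smul, hφ, presentationMap_apply]

include hφ in
theorem map_smul_eq_aevalOfCommute (p : MvPolynomial (Fin n) k)
    (q : (Fin r → MvPolynomial (Fin n) k) ⧸ K) : φ (p • q) = aevalOfCommute x hx p (φ q) :=
  φ.toLinearMap.map_smul_of_map_X_smul _ (fun i q => by simpa using hφ i q) p q

include hφ in
theorem presentationMap_eq_sum (f : Fin r → MvPolynomial (Fin n) k) :
    presentationMap φ f = ∑ j, aevalOfCommute x hx (f j) (presentationMap φ (Pi.single j 1)) :=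
  LinearMap.eq_sum_of_map_X_smul _ (fun i f => by simpa using presentationMap_X_smul hφ i f) f

include hx hφ in
theorem fst_mem_commTangentEnd_of_mem_deformations {zL} (h : zL ∈ deformations x φ) :
    zL.1 ∈ commTangentEnd k x := by
  intro i j
  ext u
  obtain ⟨f, rfl⟩ := presentationMap_surjective φ u
  have e := congrArg zL.2 
    (smul_comm (X i : MvPolynomial (Fin n) k) (X j : MvPolynomial (Fin n) k) f)
  rw [h, h, h, h, presentationMap_X_smul hφ, presentationMap_X_smul hφ, map_add, map_add,
    ← Module.End.mul_apply (x i) (x j), (hx i j).eq, Module.End.mul_apply] at e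
  simp only [LinearMap.sub_apply, LinearMap.add_apply, Module.End.mul_apply, LinearMap.zero_apply]
  linear_combination (norm := skip) e
  abel

include hx in
theorem eq_zero_of_mem_deformations {L : (Fin r → MvPolynomial (Fin n) k) →ₗ[k] V}
    (h : (0, L) ∈ deformations x φ) (hL : ∀ j, L (Pi.single j 1) = 0) : L = 0 := by
  refine LinearMap.ext fun f => ?_
  rw [LinearMap.eq_sum_of_map_X_smul (aevalOfCommute x hx) (fun i f => by simpa using h i f) f]
  simp [hL]

noncomputable def deformationsToTangent :
    deformations x φ →ₗ[k] commTangentEnd k x × (Fin r → V) where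
  toFun zL := (⟨zL.1.1, fst_mem_commTangentEnd_of_mem_deformations hx hφ zL.2⟩,
    fun j => zL.1.2 (Pi.single j 1))
  map_add' _ _ := rfl
  map_smul' _ _ := rfl

theorem deformationsToTangent_bijective : Function.Bijective (deformationsToTangent hx hφ) := by
  refine ⟨(injective_iff_map_eq_zero _).2 fun ⟨⟨z, L⟩, h⟩ h0 => ?_, fun ⟨⟨z, hz⟩, w⟩ => ?_⟩
  · simp only [deformationsToTangent, LinearMap.coe_mk, AddHom.coe_mk, Prod.mk_eq_zero,
      Submodule.mk_eq_zero, funext_iff, Pi.zero_apply] at h0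
    obtain rfl : z = 0 := funext h0.1
    simp [eq_zero_of_mem_deformations hx h h0.2]
  · refine ⟨⟨(z, tangentLift hx hz (fun j => presentationMap φ (Pi.single j 1)) w),
      fun i f => ?_⟩, ?_⟩
    · rw [tangentLift_X_smul, ← presentationMap_eq_sum hx hφ]
    · simp [deformationsToTangent, tangentLift_single]

theorem map_smul_of_mem_deformations {zL} (h : zL ∈ deformations x φ)
    (p : MvPolynomial (Fin n) k) {f} (hf : f ∈ K) : zL.2 (p • f) = aevalOfCommute x hx p (zL.2 f) :=
  (zL.2 ∘ₗ K.subtype.restrictScalars k).map_smul_of_map_X_smul (aevalOfCommute x hx)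
    (fun i g => by simp [h i, (presentationMap_eq_zero_iff φ).2 g.2]) p ⟨f, hf⟩

noncomputable def restrictDeformation : deformations x φ →ₗ[k]
    (K →ₗ[MvPolynomial (Fin n) k] ((Fin r → MvPolynomial (Fin n) k) ⧸ K)) where
  toFun zL :=
    { toFun := fun f => φ.symm (zL.1.2 f)
      map_add' := by simp
      map_smul' := fun p f => φ.injective <| by
        simp [map_smul_eq_aevalOfCommute hx hφ, map_smul_of_mem_deformations hx zL.2 p f.2] }
  map_add' _ _ := by ext; simp
  map_smul' _ _ := by ext; simp

theorem restrictDeformation_apply (zL : deformations x φ) (f : K) :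
    restrictDeformation hx hφ zL f = φ.symm (zL.1.2 f) := rfl

theorem restrictDeformation_surjective : Function.Surjective (restrictDeformation hx hφ) := by
  intro θ
  obtain ⟨L, hL⟩ := LinearMap.exists_extend (p := K.restrictScalars k)
    (φ.toLinearMap ∘ₗ θ.restrictScalars k)
  have hLK (f) (hf : f ∈ K) : L f = φ (θ ⟨f, hf⟩) := LinearMap.congr_fun hL ⟨f, hf⟩
  have hLX (i : Fin n) (f) (hf : f ∈ K) : L ((X i : MvPolynomial (Fin n) k) • f) = x i (L f) := by
    rw [hLK _ (K.smul_mem _ hf), hLK f hf, ← hφ, ← θ.map_smul]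
    rfl
  choose z hz using fun i => exists_eq_comp_presentationMap φ
    (L ∘ₗ DistribSMul.toLinearMap k _ (X i : MvPolynomial (Fin n) k) - x i ∘ₗ L)
    (fun f hf => by simp [hLX i f hf])
  refine ⟨⟨(z, L), fun i f => ?_⟩, LinearMap.ext fun f => ?_⟩
  · have := LinearMap.congr_fun (hz i) f
    simp only [LinearMap.sub_apply, LinearMap.comp_apply, DistribSMul.toLinearMap_apply] at this
    rw [← this, sub_add_cancel]
  · simp [restrictDeformation_apply, hLK _ f.2]

noncomputable def innerDeformation : Module.End k V →ₗ[k] deformations x φ where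
  toFun g := ⟨(fun i => g * x i - x i * g, g ∘ₗ presentationMap φ),
    fun i f => by simp [presentationMap_X_smul hφ]⟩
  map_add' a b := by ext <;> simp; abel
  map_smul' c a := by ext <;> simp [smul_sub]

theorem innerDeformation_injective : Function.Injective (innerDeformation hφ) := fun _ _ h =>
  (LinearMap.cancel_right (presentationMap_surjective φ)).1 (congrArg (fun zL => zL.1.2) h)

theorem range_innerDeformation :
    LinearMap.range (innerDeformation hφ) = LinearMap.ker (restrictDeformation hx hφ) := by
  ext ⟨⟨z, L⟩, h⟩
  constructor
  · rintro ⟨g, hg⟩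
    rw [← hg]
    ext f
    simp [restrictDeformation_apply, innerDeformation, (presentationMap_eq_zero_iff φ).2 f.2]
  · intro hker
    have hLK (f) (hf : f ∈ K) : L f = 0 := by
      simpa [restrictDeformation_apply] using LinearMap.congr_fun hker ⟨f, hf⟩
    obtain ⟨g, rfl⟩ := exists_eq_comp_presentationMap φ L hLK
    refine ⟨g, Subtype.ext (Prod.ext (funext fun i => ?_) rfl)⟩
    refine (LinearMap.cancel_right (presentationMap_surjective φ)).1 (LinearMap.ext fun f => ?_)
    have := h i f
    simp [presentationMap_X_smul hφ] at this
    simp [innerDeformation, this]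

variable [FiniteDimensional k V]

include hx hφ in
theorem finiteDimensional_deformations : FiniteDimensional k (deformations x φ) :=
  Module.Finite.equiv (LinearEquiv.ofBijective _ (deformationsToTangent_bijective hx hφ)).symm

include hx hφ in
theorem finrank_deformations_eq_finrank_commTangentEnd_add :
    Module.finrank k (deformations x φ) =
      Module.finrank k (commTangentEnd k x) + r * Module.finrank k V := by
  rw [(LinearEquiv.ofBijective _ (deformationsToTangent_bijective hx hφ)).finrank_eq,
    Module.finrank_prod, Module.finrank_pi_fintype, Finset.sum_const, Finset.card_univ,
    Fintype.card_fin, smul_eq_mul]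

include hx hφ in
theorem finrank_deformations_eq_finrank_hom_add :
    Module.finrank k (deformations x φ) = Module.finrank k
        (K →ₗ[MvPolynomial (Fin n) k] ((Fin r → MvPolynomial (Fin n) k) ⧸ K)) +
      Module.finrank k V * Module.finrank k V := by
  have := finiteDimensional_deformations hx hφ
  rw [← (restrictDeformation hx hφ).finrank_range_add_finrank_ker,
    LinearMap.range_eq_top.2 (restrictDeformation_surjective hx hφ), finrank_top,
    ← range_innerDeformation hx hφ, LinearMap.finrank_range_of_inj (innerDeformation_injective hφ),
    Module.finrank_linearMap k k V V]

end Presentation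

theorem finrank_hom_K_quot (k : Type*) [Field k]
    (V : Type*) [AddCommGroup V] [Module k V] [FiniteDimensional k V]
    (d n r : ℕ) (hd : Module.finrank k V = d)
    (x : Fin n → Module.End k V) (hx : ∀ i j, Commute (x i) (x j))
    (K : Submodule (MvPolynomial (Fin n) k) (Fin r → MvPolynomial (Fin n) k))
    (φ : ((Fin r → MvPolynomial (Fin n) k) ⧸ K) ≃ₗ[k] V)
    (hφ2 : ∀ (i : Fin n) (q : (Fin r → MvPolynomial (Fin n) k) ⧸ K),
      φ ((MvPolynomial.X i : MvPolynomial (Fin n) k) • q) = x i (φ q)) :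
    @FiniteDimensional k (RestrictScalars k (MvPolynomial (Fin n) k)
        (↥K →ₗ[MvPolynomial (Fin n) k] ((Fin r → MvPolynomial (Fin n) k) ⧸ K))) _ _
        (@RestrictScalars.module _ _ _ _ _ _ _ LinearMap.module) ∧
      (Module.finrank k (RestrictScalars k (MvPolynomial (Fin n) k)
          (↥K →ₗ[MvPolynomial (Fin n) k] ((Fin r → MvPolynomial (Fin n) k) ⧸ K))) : ℤ) =
        (r : ℤ) * d - (d : ℤ) ^ 2 +
          Module.finrank k ↥(commTangentEnd k x) := by
  have := finiteDimensional_deformations hx hφ2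
  have hfin : FiniteDimensional k
      (K →ₗ[MvPolynomial (Fin n) k] ((Fin r → MvPolynomial (Fin n) k) ⧸ K)) :=
    Module.Finite.of_surjective _ (restrictDeformation_surjective hx hφ2)
  have e := RestrictScalars.linearEquiv k (MvPolynomial (Fin n) k)
    (K →ₗ[MvPolynomial (Fin n) k] ((Fin r → MvPolynomial (Fin n) k) ⧸ K))
  have hT := finrank_deformations_eq_finrank_commTangentEnd_add hx hφ2
  have hH := finrank_deformations_eq_finrank_hom_add hx hφ2
  -- The `k`-module instance is the one written in the statement; it is not found by synthesis.
  refine ⟨@Module.Finite.equiv _ _ _ _ _ _ _ (_) hfin e.symm, ?_⟩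
  rw [e.finrank_eq]
  subst hd
  linarith
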